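/- arXiv:1308.0677 — 4 statements merged into one kernel-verified Lean document; each statement's English description precedes it below -/
import Mathlib

section
/- Let 0 ≤ β < 1. Define the map from (ℓ, g, L, G) to (μ, ν, M, N) by: tan ν = √((1-β)/(1+β))·tan ℓ (with the branch given by sin ν = -√(1-β) sin ℓ/√(1+β cos 2ℓ), cos ν = √(1+β) cos ℓ/√(1+β cos 2ℓ)), μ = g - ν, M = G, N = G - L·(1+β·cos 2ℓ)/√(1-β²). Then this transformation satisfies the Mathieu condition M·dμ + N·dν = L·dℓ + G·dg, i.e., the differential 1-forms agree: M·(∂μ/∂ℓ) + N·(∂ν/∂ℓ) = L, M·(∂μ/∂g) + N·(∂ν/∂g) = G, M·(∂μ/∂L) + N·(∂ν/∂L) = 0, and M·(∂μ/∂G) + N·(∂ν/∂G) = 0. -/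
open Real

/-- The transformation from action-angle variables `(ℓ, g, L, G)` to Andoyer variables
`(μ, ν, M, N)` given by `μ = g - ν(ℓ)`, `M = G`, `N = G - L(1 + β cos 2ℓ)/√(1-β²)`,
where `ν` is the function of `ℓ` determined by the stated branch, satisfies the
Mathieu condition `M dμ + N dν = L dℓ + G dg`, expressed coefficient-wise. -/
theorem mathieu_condition (β L G ℓ₀ d : ℝ) (hβ0 : 0 ≤ β) (hβ1 : β < 1)
    (ν : ℝ → ℝ)
    (hsin : ∀ ℓ, Real.sin (ν ℓ) =
      -(Real.sqrt (1 - β) * Real.sin ℓ) / Real.sqrt (1 + β * Real.cos (2 * ℓ)))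
    (hcos : ∀ ℓ, Real.cos (ν ℓ) =
      Real.sqrt (1 + β) * Real.cos ℓ / Real.sqrt (1 + β * Real.cos (2 * ℓ)))
    (hd : HasDerivAt ν d ℓ₀)
    (μ : ℝ → ℝ → ℝ) (hμ : ∀ ℓ g, μ ℓ g = g - ν ℓ)
    (M : ℝ) (hM : M = G)
    (N : ℝ → ℝ)
    (hN : ∀ ℓ, N ℓ = G - L * (1 + β * Real.cos (2 * ℓ)) / Real.sqrt (1 - β ^ 2)) :
    -- M·(∂μ/∂ℓ) + N·(∂ν/∂ℓ) = L
    (∀ g, M * deriv (fun ℓ => μ ℓ g) ℓ₀ + N ℓ₀ * d = L) ∧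
    -- M·(∂μ/∂g) + N·(∂ν/∂g) = G  (ν does not depend on g)
    (∀ g, M * deriv (fun g' => μ ℓ₀ g') g + N ℓ₀ * 0 = G) ∧
    -- M·(∂μ/∂L) + N·(∂ν/∂L) = 0  (μ, ν do not depend on L)
    (M * 0 + N ℓ₀ * 0 = 0) ∧
    -- M·(∂μ/∂G) + N·(∂ν/∂G) = 0  (μ, ν do not depend on G)
    (M * 0 + N ℓ₀ * 0 = 0) := by
  have hQpos : ∀ ℓ : ℝ, 0 < 1 + β * Real.cos (2 * ℓ) := by
    intro ℓ
    nlinarith [Real.neg_one_le_cos (2 * ℓ)]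
  have hQne : ∀ ℓ : ℝ, (1 + β * Real.cos (2 * ℓ)) ≠ 0 := fun ℓ => (hQpos ℓ).ne'
  have hqpos : ∀ ℓ : ℝ, 0 < Real.sqrt (1 + β * Real.cos (2 * ℓ)) :=
    fun ℓ => Real.sqrt_pos.mpr (hQpos ℓ)
  have hqne : ∀ ℓ : ℝ, Real.sqrt (1 + β * Real.cos (2 * ℓ)) ≠ 0 := fun ℓ => (hqpos ℓ).ne'
  set a := Real.sqrt (1 - β) with ha
  set b := Real.sqrt (1 + β) with hb
  have hapos : 0 < a := Real.sqrt_pos.mpr (by linarith)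
  have hbpos : 0 < b := Real.sqrt_pos.mpr (by linarith)
  have hab : a * b = Real.sqrt (1 - β ^ 2) := by
    rw [ha, hb, ← Real.sqrt_mul (by linarith)]
    ring_nf
  have habpos : 0 < Real.sqrt (1 - β ^ 2) := by rw [← hab]; positivity
  have hQ : HasDerivAt (fun ℓ : ℝ => 1 + β * Real.cos (2 * ℓ))
      (β * (-Real.sin (2 * ℓ₀) * 2)) ℓ₀ := by
    have h2 : HasDerivAt (fun ℓ : ℝ => 2 * ℓ) 2 ℓ₀ := by
      simpa using (hasDerivAt_id ℓ₀).const_mul 2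
    exact ((h2.cos).const_mul β).const_add 1
  set q₀ := Real.sqrt (1 + β * Real.cos (2 * ℓ₀)) with hq₀
  have hsq : HasDerivAt (fun ℓ : ℝ => Real.sqrt (1 + β * Real.cos (2 * ℓ)))
      (β * (-Real.sin (2 * ℓ₀) * 2) / (2 * q₀)) ℓ₀ := hQ.sqrt (hQne ℓ₀)
  set D := β * (-Real.sin (2 * ℓ₀) * 2) / (2 * q₀) with hD
  set c0 := Real.cos (ν ℓ₀) with hc0
  set s0 := Real.sin (ν ℓ₀) with hs0
  have hfun1 : (fun ℓ => Real.sin (ν ℓ) * Real.sqrt (1 + β * Real.cos (2 * ℓ)))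
      = fun ℓ => -(a * Real.sin ℓ) := by
    funext ℓ
    rw [hsin ℓ, div_mul_cancel₀ _ (hqne ℓ)]
  have hE1' : HasDerivAt (fun ℓ => Real.sin (ν ℓ) * Real.sqrt (1 + β * Real.cos (2 * ℓ)))
      (c0 * d * q₀ + s0 * D) ℓ₀ := (hd.sin).mul hsq
  have hE1'' : HasDerivAt (fun ℓ : ℝ => -(a * Real.sin ℓ)) (-(a * Real.cos ℓ₀)) ℓ₀ :=
    ((Real.hasDerivAt_sin ℓ₀).const_mul a).neg
  have E1 : c0 * d * q₀ + s0 * D = -(a * Real.cos ℓ₀) := by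
    rw [hfun1] at hE1'
    exact hE1'.unique hE1''
  have hfun2 : (fun ℓ => Real.cos (ν ℓ) * Real.sqrt (1 + β * Real.cos (2 * ℓ)))
      = fun ℓ => b * Real.cos ℓ := by
    funext ℓ
    rw [hcos ℓ, div_mul_cancel₀ _ (hqne ℓ)]
  have hE2' : HasDerivAt (fun ℓ => Real.cos (ν ℓ) * Real.sqrt (1 + β * Real.cos (2 * ℓ)))
      (-s0 * d * q₀ + c0 * D) ℓ₀ := (hd.cos).mul hsq
  have hE2'' : HasDerivAt (fun ℓ : ℝ => b * Real.cos ℓ) (b * -Real.sin ℓ₀) ℓ₀ :=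
    (Real.hasDerivAt_cos ℓ₀).const_mul b
  have E2 : -s0 * d * q₀ + c0 * D = b * -Real.sin ℓ₀ := by
    rw [hfun2] at hE2'
    exact hE2'.unique hE2''
  have hpyth : s0 ^ 2 + c0 ^ 2 = 1 := Real.sin_sq_add_cos_sq (ν ℓ₀)
  have hpyth2 : Real.sin ℓ₀ ^ 2 + Real.cos ℓ₀ ^ 2 = 1 := Real.sin_sq_add_cos_sq ℓ₀
  have hcomb : d * q₀ = -(a * Real.cos ℓ₀) * c0 + (b * Real.sin ℓ₀) * s0 := by
    linear_combination c0 * E1 - s0 * E2 - d * q₀ * hpyth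
  have hc0v : c0 = b * Real.cos ℓ₀ / q₀ := hcos ℓ₀
  have hs0v : s0 = -(a * Real.sin ℓ₀) / q₀ := hsin ℓ₀
  have hq₀sq : q₀ ^ 2 = 1 + β * Real.cos (2 * ℓ₀) := Real.sq_sqrt (hQpos ℓ₀).le
  have hq0ne : q₀ ≠ 0 := hqne ℓ₀
  have h2 : d * q₀ * q₀ = -(a * b) := by
    rw [hc0v, hs0v] at hcomb
    field_simp [hq0ne] at hcomb
    have h2' : (d * q₀ * q₀) * q₀ = (-(a * b)) * q₀ := by
      linear_combination q₀ * hcomb - a * b * q₀ * hpyth2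
    exact mul_right_cancel₀ hq0ne h2'
  have hdval : d = -(a * b) / (1 + β * Real.cos (2 * ℓ₀)) := by
    rw [← hq₀sq, eq_div_iff (pow_ne_zero 2 hq0ne)]
    linear_combination h2
  refine ⟨?_, ?_, by ring, by ring⟩
  · intro g
    have hμℓ : (fun ℓ => μ ℓ g) = fun ℓ => g - ν ℓ := funext fun ℓ => hμ ℓ g
    have hder : deriv (fun ℓ => μ ℓ g) ℓ₀ = -d := by
      rw [hμℓ]; exact (hd.const_sub g).deriv
    have hab0 : a * b ≠ 0 := by positivity
    rw [hder, hM, hN, hdval, ← hab]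
    field_simp [hQne ℓ₀, hab0]
    ring
  · intro g
    have hμg : (fun g' => μ ℓ₀ g') = fun g' => g' - ν ℓ₀ := funext fun g' => hμ ℓ₀ g'
    have hder : deriv (fun g' => μ ℓ₀ g') g = 1 := by
      rw [hμg]
      simpa using ((hasDerivAt_id g).sub_const (ν ℓ₀)).deriv
    rw [hder, hM]
    ring
end

section
/- Let 0 ≤ β < 1. If sin ℓ = -√(1+β)·sin ν/√(1-β·cos 2ν) and cos ℓ = √(1-β)·cos ν/√(1-β·cos 2ν), and L = (M - N)·(1-β·cos 2ν)/√(1-β²), then N = G - L·(1+β·cos 2ℓ)/√(1-β²) where G = M; i.e., the given formulas are mutually inverse transformations between (ν, N) and (ℓ, L) for fixed M = G. -/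
open Real

theorem inverse_transformation (β ν ℓ L M N G : ℝ) (hβ0 : 0 ≤ β) (hβ1 : β < 1)
    (hG : G = M)
    (hsin : Real.sin ℓ = -(Real.sqrt (1 + β) * Real.sin ν) / Real.sqrt (1 - β * Real.cos (2 * ν)))
    (hcos : Real.cos ℓ = Real.sqrt (1 - β) * Real.cos ν / Real.sqrt (1 - β * Real.cos (2 * ν)))
    (hL : L = (M - N) * (1 - β * Real.cos (2 * ν)) / Real.sqrt (1 - β ^ 2)) :
    N = G - L * (1 + β * Real.cos (2 * ℓ)) / Real.sqrt (1 - β ^ 2) := by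
  have hD : 0 < 1 - β * Real.cos (2 * ν) := by
    nlinarith [Real.cos_le_one (2 * ν)]
  have h1β : (0:ℝ) ≤ 1 - β := by linarith
  have hc2 : Real.cos ℓ ^ 2 = (1 - β) * Real.cos ν ^ 2 / (1 - β * Real.cos (2 * ν)) := by
    rw [hcos, div_pow, mul_pow]
    rw [Real.sq_sqrt h1β, Real.sq_sqrt hD.le]
  have hcos2l : Real.cos (2 * ℓ) = 2 * Real.cos ℓ ^ 2 - 1 := by
    rw [Real.cos_two_mul]
  have hkey : (1 - β * Real.cos (2 * ν)) * (1 + β * Real.cos (2 * ℓ)) = 1 - β ^ 2 := by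
    rw [hcos2l, hc2]
    field_simp [hD.ne']
    rw [Real.cos_two_mul ν]
    ring
  have hb2 : (0:ℝ) < 1 - β ^ 2 := by nlinarith
  have hs : Real.sqrt (1 - β ^ 2) ^ 2 = 1 - β ^ 2 := Real.sq_sqrt hb2.le
  have hspos : 0 < Real.sqrt (1 - β ^ 2) := Real.sqrt_pos.mpr hb2
  rw [hG, hL]
  rw [div_mul_eq_mul_div, div_div, Real.mul_self_sqrt hb2.le]
  field_simp
  linear_combination (M - N) * hkey
end

section
/- Let A ≤ B ≤ C be positive principal moments of inertia, α(1±β) = C/A - 1, C/B - 1 as in Andoyer's parameters, and let α*(1+β*) = A/C - 1, α*(1-β*) = A/B - 1 be the corresponding parameters after interchanging A and C. Then β* = (1-β)/(1+3β), provided the denominators are nonzero. -/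
open Real

/-- Hitzl–Breakwell relation between SAM and LAM triaxiality coefficients:
`β* = (1-β)/(1+3β)`. -/
theorem hitzl_breakwell (A B C α β αs βs : ℝ)
    (hA : 0 < A) (hAB : A ≤ B) (hBC : B ≤ C)
    (h1 : α * (1 + β) = C / A - 1) (h2 : α * (1 - β) = C / B - 1)
    (h3 : αs * (1 + βs) = A / C - 1) (h4 : αs * (1 - βs) = A / B - 1)
    (hα : α ≠ 0) (hαs : αs ≠ 0) (hden : 1 + 3 * β ≠ 0) :
    βs = (1 - β) / (1 + 3 * β) := by
  have hB : 0 < B := hA.trans_le hAB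
  have hC : 0 < C := hB.trans_le hBC
  field_simp at h1 h2 h3 h4
  rw [eq_div_iff hden]
  have E1 : 2 * (αs * βs) * (B * C) = A * (B - C) := by linear_combination B * h3 - C * h4
  have E2 : 2 * αs * (B * C) = A * B + A * C - 2 * (B * C) := by linear_combination B * h3 + C * h4
  have G1 : α * (1 + 3 * β) * (A * B) = 2 * C * B - C * A - A * B := by
    linear_combination 2 * B * h1 - A * h2
  have G2 : α * (1 - β) * (A * B) = (C - B) * A := by linear_combination A * h2
  have hne : α * (A * B) * (2 * αs * (B * C)) ≠ 0 := by positivity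
  apply mul_left_cancel₀ hne
  linear_combination (2 * αs * βs * B * C) * G1 + (2 * C * B - C * A - A * B) * E1
    - (2 * αs * B * C) * G2 - ((C - B) * A) * E2
end

section
/- For 0 ≤ β < 1, the Hessian matrix of the reduced Hamiltonian Φ(L,G) = (G²/(2C))·(1 + 2α√(1-β²)·L/G) = (G² + 2α√(1-β²)·L·G)/(2C) with respect to (L, G) has determinant -α²(1-β²)/C² , which is nonzero whenever α ≠ 0. -/
open Real

/-- The Hessian of the reduced Hamiltonian `Φ(L,G) = (G² + 2α√(1-β²)·L·G)/(2C)` with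
respect to `(L, G)` has determinant `-α²(1-β²)/C²`, nonzero whenever `α ≠ 0`. -/
theorem hessian_determinant (β C α : ℝ) (hβ0 : 0 ≤ β) (hβ1 : β < 1) (hC : 0 < C)
    (Φ : ℝ → ℝ → ℝ)
    (hΦ : ∀ L G, Φ L G = (G ^ 2 + 2 * α * Real.sqrt (1 - β ^ 2) * L * G) / (2 * C)) :
    ∀ L G : ℝ,
      (Matrix.det !![deriv (fun l => deriv (fun l' => Φ l' G) l) L,
                     deriv (fun g => deriv (fun l => Φ l g) L) G;
                     deriv (fun l => deriv (fun g => Φ l g) G) L,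
                     deriv (fun g => deriv (fun g' => Φ L g') g) G] =
        -(α ^ 2 * (1 - β ^ 2)) / C ^ 2) ∧
      (α ≠ 0 →
        Matrix.det !![deriv (fun l => deriv (fun l' => Φ l' G) l) L,
                      deriv (fun g => deriv (fun l => Φ l g) L) G;
                      deriv (fun l => deriv (fun g => Φ l g) G) L,
                      deriv (fun g => deriv (fun g' => Φ L g') g) G] ≠ 0) := by
  have hΦ' : Φ = fun L G => (G ^ 2 + 2 * α * Real.sqrt (1 - β ^ 2) * L * G) / (2 * C) :=
    funext fun L => funext fun G => hΦ L G
  subst hΦ'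
  set k : ℝ := 2 * α * Real.sqrt (1 - β ^ 2) with hk
  have hsq : Real.sqrt (1 - β ^ 2) ^ 2 = 1 - β ^ 2 := by
    rw [Real.sq_sqrt]
    nlinarith
  -- derivative in L
  have dL : ∀ (g l : ℝ), deriv (fun l' => (g ^ 2 + k * l' * g) / (2 * C)) l = k * g / (2 * C) := by
    intro g l
    have h : HasDerivAt (fun l' : ℝ => (g ^ 2 + k * l' * g) / (2 * C)) (k * g / (2 * C)) l := by
      have h1 : HasDerivAt (fun l' : ℝ => k * l' * g) (k * g) l := by
        simpa [mul_comm, mul_assoc, mul_left_comm] using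
          (((hasDerivAt_id l).const_mul k).mul_const g)
      simpa using ((h1.const_add (g ^ 2)).div_const (2 * C))
    exact h.deriv
  -- derivative in G
  have dG : ∀ (l g : ℝ), deriv (fun g' => (g' ^ 2 + k * l * g') / (2 * C)) g
      = (2 * g + k * l) / (2 * C) := by
    intro l g
    have h : HasDerivAt (fun g' : ℝ => (g' ^ 2 + k * l * g') / (2 * C))
        ((2 * g + k * l) / (2 * C)) g := by
      have h1 : HasDerivAt (fun g' : ℝ => g' ^ 2) (2 * g) g := by
        simpa using (hasDerivAt_pow 2 g)
      have h2 : HasDerivAt (fun g' : ℝ => k * l * g') (k * l) g := by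
        simpa using ((hasDerivAt_id g).const_mul (k * l))
      simpa using ((h1.add h2).div_const (2 * C))
    exact h.deriv
  intro L G
  have e11 : deriv (fun l => deriv (fun l' => (G ^ 2 + k * l' * G) / (2 * C)) l) L = 0 := by
    simp only [dL]
    simp
  have e12 : deriv (fun g => deriv (fun l => (g ^ 2 + k * l * g) / (2 * C)) L) G
      = k / (2 * C) := by
    simp only [dL]
    have h : HasDerivAt (fun g : ℝ => k * g / (2 * C)) (k / (2 * C)) G := by
      simpa using (((hasDerivAt_id G).const_mul k).div_const (2 * C))
    exact h.deriv
  have e21 : deriv (fun l => deriv (fun g => (g ^ 2 + k * l * g) / (2 * C)) G) L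
      = k / (2 * C) := by
    simp only [dG]
    have h : HasDerivAt (fun l : ℝ => (2 * G + k * l) / (2 * C)) (k / (2 * C)) L := by
      have h1 : HasDerivAt (fun l : ℝ => k * l) k L := by
        simpa using ((hasDerivAt_id L).const_mul k)
      simpa using ((h1.const_add (2 * G)).div_const (2 * C))
    exact h.deriv
  have e22 : deriv (fun g => deriv (fun g' => (g' ^ 2 + k * L * g') / (2 * C)) g) G
      = 2 / (2 * C) := by
    simp only [dG]
    have h : HasDerivAt (fun g : ℝ => (2 * g + k * L) / (2 * C)) (2 / (2 * C)) G := by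
      have h1 : HasDerivAt (fun g : ℝ => 2 * g) 2 G := by
        simpa using ((hasDerivAt_id G).const_mul (2 : ℝ))
      simpa using ((h1.add_const (k * L)).div_const (2 * C))
    exact h.deriv
  have hdet : Matrix.det !![deriv (fun l => deriv (fun l' => (G ^ 2 + k * l' * G) / (2 * C)) l) L,
      deriv (fun g => deriv (fun l => (g ^ 2 + k * l * g) / (2 * C)) L) G;
      deriv (fun l => deriv (fun g => (g ^ 2 + k * l * g) / (2 * C)) G) L,
      deriv (fun g => deriv (fun g' => (g' ^ 2 + k * L * g') / (2 * C)) g) G]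
      = -(α ^ 2 * (1 - β ^ 2)) / C ^ 2 := by
    rw [Matrix.det_fin_two_of, e11, e12, e21, e22]
    have hC' : (C : ℝ) ≠ 0 := ne_of_gt hC
    field_simp [hk]
    linear_combination (-4 * α ^ 2) * hsq
  refine ⟨hdet, fun hα => ?_⟩
  rw [hdet]
  have h1 : (0:ℝ) < 1 - β ^ 2 := by nlinarith
  have : 0 < α ^ 2 * (1 - β ^ 2) / C ^ 2 := by positivity
  intro h
  rw [neg_div] at h
  linarith
end
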